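/- arXiv:1209.1651 — 6 statements merged into one kernel-verified Lean document; each statement's English description precedes it below -/
import Mathlib

section
/- Let M be a loopless matroid on E = {0,...,N}, let V be the free abelian group on e₀,...,e_N, and for a subset S ⊆ E write e_S = Σ_{j∈S} e_j. If J ⊆ J'' are flats with rk(J'') ≥ rk(J)+2 and J'₁,...,J'_s are the flats of rank rk(J)+1 strictly between J and J'', then e_J ∧ e_{J''} = Σ_{i=1}^{s} e_J ∧ e_{J'_i} in ⋀² V. -/
/-! The flats `J'ᵢ` of rank `rk J + 1` between `J` and `J''` are exactly the closures
`cl (J ∪ {j})`, `j ∈ J'' \ J`, so the sets `J'ᵢ \ J` partition `J'' \ J`. Hence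
`e_{J''} - e_J = Σᵢ (e_{J'ᵢ} - e_J)`, and wedging with `e_J` kills every `e_J` on the right. -/

open ExteriorAlgebra

set_option maxHeartbeats 1000000
set_option synthInstance.maxHeartbeats 400000

open Classical in
/-- `e_S`: sum of the standard basis vectors of `ℤ^n` indexed by `S`. -/
noncomputable def eS {n : ℕ} (S : Set (Fin n)) : Fin n → ℤ := fun j => if j ∈ S then 1 else 0

/-- the `i`-th standard basis vector of `ℤ^n`. -/
noncomputable def fb {n : ℕ} (i : Fin n) : Fin n → ℤ := Pi.single i 1

/-- The pairing of a pure `k`-fold wedge `v₁ ∧ ... ∧ v_k` of vectors of `V` with the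
exterior algebra of the dual module, determined by
`⟨w₁ ∧ ... ∧ w_k, v₁ ∧ ... ∧ v_k⟩ = det (wᵢ (vⱼ))` on the degree-`k` part and `0` on
other degrees. -/
noncomputable def pairPure {V : Type*} [AddCommGroup V] [Module ℤ V] (k : ℕ)
    (v : Fin k → V) : ExteriorAlgebra ℤ (Module.Dual ℤ V) →ₗ[ℤ] ℤ :=
  ExteriorAlgebra.liftAlternating fun m =>
    if h : m = k then
      h ▸ (Matrix.detRowAlternating.compLinearMap
        (LinearMap.pi fun j : Fin k => LinearMap.applyₗ (v j)))
    else 0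

/-- A matroid is loopless if every singleton of the ground set is independent. -/
def Matroid.Loopless' {α : Type*} (M : Matroid α) : Prop := ∀ x ∈ M.E, M.Indep {x}

/-- The rank of a set in a matroid: the largest cardinality of an independent subset. -/
noncomputable def Matroid.rk' {α : Type*} (M : Matroid α) (X : Set α) : ℕ :=
  sSup {m : ℕ | ∃ I, I ⊆ X ∧ M.Indep I ∧ I.ncard = m}

namespace Matroid

variable {α : Type*} {M : Matroid α} {X F F₁ F₂ J J'' : Set α} {e : α}

lemma rk'_eq_eRk (hX : M.IsRkFinite X) : (M.rk' X : ℕ∞) = M.eRk X := by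
  obtain ⟨I, hI, hIfin⟩ := hX.exists_finite_isBasis'
  have hmax : IsGreatest {m : ℕ | ∃ I, I ⊆ X ∧ M.Indep I ∧ I.ncard = m} I.ncard := by
    refine ⟨⟨I, hI.subset, hI.indep, rfl⟩, ?_⟩
    rintro _ ⟨K, hKX, hK, rfl⟩
    have hle := hK.encard_le_eRk_of_subset hKX
    rw [← hI.encard_eq_eRk, ← (hX.finite_of_indep_subset hK hKX).cast_ncard_eq,
      ← hIfin.cast_ncard_eq] at hle
    exact_mod_cast hle
  rw [rk', hmax.csSup_eq, hIfin.cast_ncard_eq, hI.encard_eq_eRk]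

variable [Finite α]

lemma IsFlat.eq_of_subset_of_rk'_eq (hF₁ : M.IsFlat F₁) (hF₂ : M.IsFlat F₂) (h : F₁ ⊆ F₂)
    (hr : M.rk' F₁ = M.rk' F₂) : F₁ = F₂ := by
  have hle : M.eRk F₂ ≤ M.eRk F₁ := by
    rw [← rk'_eq_eRk (M.isRkFinite_of_finite F₁.toFinite),
      ← rk'_eq_eRk (M.isRkFinite_of_finite F₂.toFinite), hr]
  rw [← hF₁.closure, ← hF₂.closure]
  exact (M.isRkFinite_of_finite F₁.toFinite).closure_eq_closure_of_subset_of_eRk_ge_eRk h hle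

lemma IsFlat.rk'_closure_insert (hF : M.IsFlat F) (he : e ∈ M.E) (heF : e ∉ F) :
    M.rk' (M.closure (insert e F)) = M.rk' F + 1 := by
  apply Nat.cast_injective (R := ℕ∞)
  rw [Nat.cast_add, Nat.cast_one, rk'_eq_eRk (M.isRkFinite_of_finite (Set.toFinite _)),
    rk'_eq_eRk (M.isRkFinite_of_finite F.toFinite), eRk_closure_eq,
    eRk_insert_eq_add_one ⟨he, by rwa [hF.closure]⟩]

def flatsCoveringBetween (M : Matroid α) (J J'' : Set α) : Set (Set α) :=
  {J' | M.IsFlat J' ∧ J ⊂ J' ∧ J' ⊂ J'' ∧ M.rk' J' = M.rk' J + 1}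

lemma IsFlat.closure_insert_eq_of_rk'_eq_add_one (hJ : M.IsFlat J) (hF : M.IsFlat F)
    (hJF : J ⊆ F) (hr : M.rk' F = M.rk' J + 1) (he : e ∈ F \ J) :
    M.closure (insert e J) = F := by
  refine IsFlat.eq_of_subset_of_rk'_eq (M.isFlat_closure _) hF ?_ ?_
  · simpa only [hF.closure] using M.closure_subset_closure (Set.insert_subset he.1 hJF)
  · rw [hJ.rk'_closure_insert (hF.subset_ground he.1) he.2, hr]

lemma IsFlat.closure_insert_mem_flatsCoveringBetween (hJ : M.IsFlat J) (hJ'' : M.IsFlat J'')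
    (hsub : J ⊆ J'') (hrk : M.rk' J + 2 ≤ M.rk' J'') (he : e ∈ J'' \ J) :
    M.closure (insert e J) ∈ M.flatsCoveringBetween J J'' := by
  have heE : e ∈ M.E := hJ''.subset_ground he.1
  have hr := hJ.rk'_closure_insert heE he.2
  have heF : e ∈ M.closure (insert e J) := M.mem_closure_of_mem' (Set.mem_insert e J)
  refine ⟨M.isFlat_closure _, ?_, ?_, hr⟩
  · exact (M.subset_closure_of_subset' (Set.subset_insert e J) hJ.subset_ground).ssubset_of_ne
      fun h => he.2 (h ▸ heF)
  · refine ssubset_of_subset_of_ne ?_ ?_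
    · simpa only [hJ''.closure] using M.closure_subset_closure (Set.insert_subset he.1 hsub)
    · intro h
      rw [h] at hr
      omega

lemma biUnion_flatsCoveringBetween_sdiff (hJ : M.IsFlat J) (hJ'' : M.IsFlat J'')
    (hsub : J ⊆ J'') (hrk : M.rk' J + 2 ≤ M.rk' J'') :
    ⋃ F ∈ M.flatsCoveringBetween J J'', F \ J = J'' \ J := by
  refine subset_antisymm ?_ fun e he => ?_
  · exact Set.iUnion₂_subset fun F hF => Set.sdiff_subset_sdiff_left hF.2.2.1.subset
  · exact Set.mem_iUnion₂.2 ⟨_, hJ.closure_insert_mem_flatsCoveringBetween hJ'' hsub hrk he,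
      M.mem_closure_of_mem' (Set.mem_insert e J) (hJ''.subset_ground he.1), he.2⟩

lemma pairwiseDisjoint_flatsCoveringBetween_sdiff (hJ : M.IsFlat J) :
    (M.flatsCoveringBetween J J'').PairwiseDisjoint (· \ J) := by
  refine fun F₁ hF₁ F₂ hF₂ hne => Set.disjoint_left.2 fun e he₁ he₂ => hne ?_
  rw [← hJ.closure_insert_eq_of_rk'_eq_add_one hF₁.1 hF₁.2.1.subset hF₁.2.2.2 he₁,
    hJ.closure_insert_eq_of_rk'_eq_add_one hF₂.1 hF₂.2.1.subset hF₂.2.2.2 he₂]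

end Matroid

lemma eS_eq_indicator {n : ℕ} (S : Set (Fin n)) : eS S = S.indicator 1 := by
  classical
  funext j
  simp [eS, Set.indicator_apply]

lemma eS_sdiff {n : ℕ} {S T : Set (Fin n)} (h : S ⊆ T) : eS (T \ S) = eS T - eS S := by
  rw [eS_eq_indicator, eS_eq_indicator, eS_eq_indicator, Set.indicator_sdiff h]

lemma eS_biUnion {ι : Type*} {n : ℕ} (s : Finset ι) (t : ι → Set (Fin n))
    (h : (s : Set ι).PairwiseDisjoint t) : eS (⋃ i ∈ s, t i) = ∑ i ∈ s, eS (t i) := by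
  funext j
  simp only [eS_eq_indicator, Finset.sum_apply, Finset.indicator_biUnion_apply s t h]

lemma ExteriorAlgebra.ι_mul_ι_sub_self {R M : Type*} [CommRing R] [AddCommGroup M] [Module R M]
    (x y : M) : ι R x * ι R (y - x) = ι R x * ι R y := by
  rw [map_sub, mul_sub, ι_sq_zero, sub_zero]

theorem stmt_3_general {N : ℕ} (M : Matroid (Fin (N + 1)))
    (J J'' : Set (Fin (N + 1)))
    (hJ : M.IsFlat J) (hJ'' : M.IsFlat J'') (hsub : J ⊆ J'')
    (hrk : M.rk' J + 2 ≤ M.rk' J'') :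
    ExteriorAlgebra.ι ℤ (eS J) * ExteriorAlgebra.ι ℤ (eS J'') =
      ∑ᶠ J' ∈ {J' | M.IsFlat J' ∧ J ⊂ J' ∧ J' ⊂ J'' ∧ M.rk' J' = M.rk' J + 1},
        ExteriorAlgebra.ι ℤ (eS J) * ExteriorAlgebra.ι ℤ (eS J') := by
  have hfin : (M.flatsCoveringBetween J J'').Finite := Set.toFinite _
  have hpart : eS J'' - eS J = ∑ F ∈ hfin.toFinset, eS (F \ J) := by
    rw [← eS_sdiff hsub, ← Matroid.biUnion_flatsCoveringBetween_sdiff hJ hJ'' hsub hrk,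
      ← eS_biUnion _ _ (by simpa using Matroid.pairwiseDisjoint_flatsCoveringBetween_sdiff hJ)]
    simp only [Set.Finite.mem_toFinset]
  show _ = ∑ᶠ F ∈ M.flatsCoveringBetween J J'', _
  rw [finsum_mem_eq_finite_toFinset_sum _ hfin, ← ι_mul_ι_sub_self, hpart, map_sum,
    Finset.mul_sum]
  refine Finset.sum_congr rfl fun F hF => ?_
  rw [eS_sdiff ((hfin.mem_toFinset.1 hF).2.1.subset), ι_mul_ι_sub_self]

/-- With `e_S = Σ_{j ∈ S} e_j ∈ ℤ^{N+1}`: if `J ⊆ J''` are flats of a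
loopless matroid `M` on `{0, ..., N}` with `rk(J'') ≥ rk(J) + 2`, then in `⋀² ℤ^{N+1}`
one has `e_J ∧ e_{J''} = Σᵢ e_J ∧ e_{J'ᵢ}`, the sum over the flats `J'ᵢ` of rank
`rk(J) + 1` strictly between `J` and `J''`. -/
theorem stmt_3 {N : ℕ} (M : Matroid (Fin (N + 1))) (hM : M.Loopless')
    (hE : M.E = Set.univ) (J J'' : Set (Fin (N + 1)))
    (hJ : M.IsFlat J) (hJ'' : M.IsFlat J'') (hsub : J ⊆ J'')
    (hrk : M.rk' J + 2 ≤ M.rk' J'') :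
    ExteriorAlgebra.ι ℤ (eS J) * ExteriorAlgebra.ι ℤ (eS J'') =
      ∑ᶠ J' ∈ {J' | M.IsFlat J' ∧ J ⊂ J' ∧ J' ⊂ J'' ∧ M.rk' J' = M.rk' J + 1},
        ExteriorAlgebra.ι ℤ (eS J) * ExteriorAlgebra.ι ℤ (eS J') :=
  stmt_3_general M J J'' hJ hJ'' hsub hrk
end

section
/- Let M be a loopless matroid of rank n on {0,...,N}. In the top degree, the Orlik–Solomon ideal satisfies OS^n = ℤ⟨F_I : I dependent of size n⟩ + Im(∂ : ⋀^{n+1} W → ⋀^n W) = ℤ⟨F_I : I dependent of size n⟩ + Ker(∂ : ⋀^n W → ⋀^{n-1} W). -/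
/-!
Let `K` be the span of the `F_I` with `I` dependent of size `n`. Since `f_i ∧ F_I = 0` for
`i ∈ I`, the derivation rule gives `F_I = f_i ∧ ∂F_I`, so `K ⊆ OS`; and every `(n+1)`-set is
dependent, so `∂(⋀^{n+1} W) ⊆ OS`. Conversely, for homogeneous `x`, `y` the graded Leibniz rule
writes `x ∧ ∂F_I ∧ y` as `±∂(x ∧ F_I ∧ y)` plus products `u ∧ F_I ∧ w`; in degree `n` the latter
are combinations of `F_J` with `I ⊆ J`, `|J| = n`, and such `J` are dependent. Finally, as
`∂f_0 = 1`, every cycle `x` is the boundary `∂(f_0 ∧ x)`, so image and kernel agree.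
-/

open ExteriorAlgebra

set_option maxHeartbeats 1000000
set_option synthInstance.maxHeartbeats 400000

/-- The boundary operator `∂` on `⋀^• W` for `W = ℤ^n` with basis `f_i`:
interior multiplication by the functional sending each `f_i` to `1`.  It is the odd
derivation with `∂ f_i = 1`. -/
noncomputable def bnd (n : ℕ) :
    ExteriorAlgebra ℤ (Fin n → ℤ) →ₗ[ℤ] ExteriorAlgebra ℤ (Fin n → ℤ) :=
  CliffordAlgebra.contractLeft (∑ i : Fin n, LinearMap.proj i)

/-- `F_I = f_{i₀} ∧ ... ∧ f_{i_k}` for a finite subset `I` (in increasing order). -/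
noncomputable def FI {n : ℕ} (I : Finset (Fin n)) : ExteriorAlgebra ℤ (Fin n → ℤ) :=
  ιMulti ℤ I.card fun j => fb ((I.orderIsoOfFin rfl j : I) : Fin n)

/-- The Orlik-Solomon ideal: the two-sided ideal (equivalently, the `ℤ`-span of all
`x * ∂F_I * y`) generated by the `∂ F_I` over dependent sets `I` of the matroid `M`. -/
noncomputable def OSideal {n : ℕ} (M : Matroid (Fin n)) :
    Submodule ℤ (ExteriorAlgebra ℤ (Fin n → ℤ)) :=
  Submodule.span ℤ {z | ∃ x, ∃ y, ∃ I : Finset (Fin n),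
    M.Dep (I : Set (Fin n)) ∧ z = x * bnd n (FI I) * y}

namespace ExteriorAlgebra

section Contraction

variable {R M : Type*} [CommRing R] [AddCommGroup M] [Module R M] (φ : Module.Dual R M)

open CliffordAlgebra

theorem contractLeft_eq_zero_of_mem_exteriorPower_zero {x : ExteriorAlgebra R M}
    (hx : x ∈ ⋀[R]^0 M) : contractLeft φ x = 0 := by
  rw [exteriorPower, pow_zero] at hx
  obtain ⟨r, rfl⟩ := Submodule.mem_one.mp hx
  exact contractLeft_algebraMap _ _ _

theorem contractLeft_mem_exteriorPower {k : ℕ} {x : ExteriorAlgebra R M}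
    (hx : x ∈ ⋀[R]^(k + 1) M) : contractLeft φ x ∈ ⋀[R]^k M := by
  induction k generalizing x with
  | zero =>
    rw [exteriorPower, pow_one] at hx
    obtain ⟨v, rfl⟩ := hx
    rw [contractLeft_ι, exteriorPower, pow_zero]
    exact Submodule.algebraMap_mem _
  | succ k ih =>
    rw [exteriorPower, pow_succ'] at hx
    induction hx using Submodule.mul_induction_on' with
    | mem_mul_mem v hv y hy =>
      obtain ⟨v, rfl⟩ := hv
      rw [contractLeft_ι_mul]
      refine sub_mem (Submodule.smul_mem _ _ hy) ?_
      rw [exteriorPower, pow_succ']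
      exact Submodule.mul_mem_mul ⟨v, rfl⟩ (ih hy)
    | add a _ b _ ha hb => rw [map_add]; exact add_mem ha hb

theorem contractLeft_mul_of_mem_exteriorPower {a : ℕ} {x : ExteriorAlgebra R M}
    (hx : x ∈ ⋀[R]^a M) (w : ExteriorAlgebra R M) :
    contractLeft φ (x * w) = contractLeft φ x * w + (-1 : R) ^ a • (x * contractLeft φ w) := by
  induction a generalizing x with
  | zero =>
    rw [exteriorPower, pow_zero] at hx
    obtain ⟨r, rfl⟩ := Submodule.mem_one.mp hx
    rw [contractLeft_algebraMap, Algebra.algebraMap_eq_smul_one]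
    simp
  | succ a ih =>
    rw [exteriorPower, pow_succ'] at hx
    induction hx using Submodule.mul_induction_on' with
    | mem_mul_mem v hv y hy =>
      obtain ⟨v, rfl⟩ := hv
      rw [mul_assoc, contractLeft_ι_mul, contractLeft_ι_mul, ih hy, pow_succ]
      simp only [mul_add, sub_mul, smul_mul_assoc, mul_smul_comm, mul_assoc, mul_neg_one,
        neg_smul]
      abel
    | add p _ q _ hp hq =>
      simp only [add_mul, map_add, hp, hq, smul_add]
      abel

theorem exteriorPower_inf_ker_contractLeft {v : M} (hv : φ v = 1) (k : ℕ) :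
    ⋀[R]^k M ⊓ LinearMap.ker (contractLeft φ) = (⋀[R]^(k + 1) M).map (contractLeft φ) := by
  apply le_antisymm
  · rintro x ⟨hx, hker⟩
    refine ⟨ι R v * x, ?_, ?_⟩
    · rw [exteriorPower, pow_succ']
      exact Submodule.mul_mem_mul ⟨v, rfl⟩ hx
    · rw [contractLeft_ι_mul, hv, LinearMap.mem_ker.mp hker, mul_zero, sub_zero, one_smul]
  · rintro _ ⟨w, hw, rfl⟩
    exact ⟨contractLeft_mem_exteriorPower φ hw, contractLeft_contractLeft _ _⟩

theorem eq_ι_mul_contractLeft {v : M} (hv : φ v = 1) {x : ExteriorAlgebra R M}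
    (h : ι R v * x = 0) : x = ι R v * contractLeft φ x := by
  have := contractLeft_ι_mul (Q := (0 : QuadraticForm R M)) (d := φ) v x
  rwa [h, map_zero, hv, one_smul, eq_comm, sub_eq_zero] at this

end Contraction

section Basis

variable {R M I : Type*} [CommRing R] [AddCommGroup M] [Module R M] [LinearOrder I]
  (b : Module.Basis I R M)

def supersetSpan (k : ℕ) (B : Finset I) : Submodule R (ExteriorAlgebra R M) :=
  Submodule.span R (b.ExteriorAlgebra '' {J | B ⊆ J ∧ J.card = k})

theorem supersetSpan_anti {k : ℕ} {A B : Finset I} (h : A ⊆ B) :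
    supersetSpan b k B ≤ supersetSpan b k A :=
  Submodule.span_mono (Set.image_mono fun _ hJ => ⟨h.trans hJ.1, hJ.2⟩)

theorem supersetSpan_empty (k : ℕ) : supersetSpan b k ∅ = ⋀[R]^k M := by
  rw [← exteriorPower.ιMulti_family_span_fixedDegree_of_span R b.span_eq, supersetSpan]
  congr 1
  ext x
  constructor
  · rintro ⟨J, ⟨-, hJ⟩, rfl⟩
    exact ⟨Set.powersetCard.ofCard hJ, (basis_apply_ofCard b hJ).symm⟩
  · rintro ⟨s, rfl⟩
    exact ⟨s, ⟨Finset.empty_subset _, s.prop⟩, basis_apply_powersetCard b s⟩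

theorem basis_mem_exteriorPower (S : Finset I) : b.ExteriorAlgebra S ∈ ⋀[R]^S.card M :=
  supersetSpan_empty b S.card ▸ Submodule.subset_span ⟨S, ⟨Finset.empty_subset S, rfl⟩, rfl⟩

theorem basis_mul_basis_mem_supersetSpan (S T : Finset I) :
    b.ExteriorAlgebra S * b.ExteriorAlgebra T ∈ supersetSpan b (S.card + T.card) (S ∪ T) := by
  let s := Set.powersetCard.ofCard (rfl : S.card = S.card)
  let t := Set.powersetCard.ofCard (rfl : T.card = T.card)
  by_cases h : Disjoint S T
  · obtain ⟨c, hc⟩ : ∃ c : ℤˣ, b.ExteriorAlgebra S * b.ExteriorAlgebra T =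
        c • b.ExteriorAlgebra (S ∪ T) :=
      ⟨_, (basis_mul_of_disjoint b s t h).trans <| by
        rw [← Finset.disjUnion_eq_union S T h]; rfl⟩
    rw [hc]
    exact Submodule.smul_of_tower_mem _ _ (Submodule.subset_span
      ⟨_, ⟨subset_rfl, Finset.card_union_of_disjoint h⟩, rfl⟩)
  · rw [show b.ExteriorAlgebra S * b.ExteriorAlgebra T = 0 from
      basis_mul_of_not_disjoint b s t h]
    exact zero_mem _

theorem supersetSpan_mul_supersetSpan_le (k l : ℕ) (A B : Finset I) :
    supersetSpan b k A * supersetSpan b l B ≤ supersetSpan b (k + l) (A ∪ B) := by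
  rw [supersetSpan, supersetSpan, Submodule.span_mul_span, Submodule.span_le]
  rintro _ ⟨_, ⟨S, ⟨hAS, rfl⟩, rfl⟩, _, ⟨T, ⟨hBT, rfl⟩, rfl⟩, rfl⟩
  exact supersetSpan_anti b (Finset.union_subset_union hAS hBT)
    (basis_mul_basis_mem_supersetSpan b S T)

theorem mul_basis_mul_mem_supersetSpan {p q : ℕ} {u w : ExteriorAlgebra R M}
    (hu : u ∈ ⋀[R]^p M) (hw : w ∈ ⋀[R]^q M) (S : Finset I) :
    u * b.ExteriorAlgebra S * w ∈ supersetSpan b (p + S.card + q) S := by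
  rw [← supersetSpan_empty b] at hu hw
  have hS : b.ExteriorAlgebra S ∈ supersetSpan b S.card S :=
    Submodule.subset_span ⟨S, ⟨subset_rfl, rfl⟩, rfl⟩
  simpa using supersetSpan_mul_supersetSpan_le b _ _ _ _ <| Submodule.mul_mem_mul
    (supersetSpan_mul_supersetSpan_le b _ _ _ _ (Submodule.mul_mem_mul hu hS)) hw

theorem basis_singleton (i : I) : b.ExteriorAlgebra {i} = ι R (b i) := by
  rw [basis_apply_ofCard b (Finset.card_singleton i)]
  simp [Finset.orderEmbOfFin_singleton, Set.powersetCard.ofFinEmbEquiv_symm_apply]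

theorem ι_mul_basis_of_mem {i : I} {S : Finset I} (hi : i ∈ S) :
    ι R (b i) * b.ExteriorAlgebra S = 0 := by
  rw [← basis_singleton]
  exact basis_mul_of_not_disjoint b (Set.powersetCard.ofCard (Finset.card_singleton i))
    (Set.powersetCard.ofCard rfl) (Finset.not_disjoint_iff.mpr ⟨i, Finset.mem_singleton_self i, hi⟩)

end Basis

end ExteriorAlgebra

theorem GradedAlgebra.proj_mul_mul_mem {R A : Type*} [CommSemiring R] [Semiring A]
    [Algebra R A] (𝒜 : ℕ → Submodule R A) [GradedAlgebra 𝒜] {P : Submodule R A} {g : A}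
    {d n : ℕ} (hg : g ∈ 𝒜 d)
    (h : ∀ a b : ℕ, ∀ x ∈ 𝒜 a, ∀ y ∈ 𝒜 b, a + d + b = n → x * g * y ∈ P) (x y : A) :
    GradedAlgebra.proj 𝒜 n (x * g * y) ∈ P := by
  induction x using DirectSum.Decomposition.inductionOn 𝒜 with
  | zero => simp
  | add x₁ x₂ h₁ h₂ => rw [add_mul, add_mul, map_add]; exact add_mem h₁ h₂
  | @homogeneous a x =>
    induction y using DirectSum.Decomposition.inductionOn 𝒜 with
    | zero => simp
    | add y₁ y₂ h₁ h₂ => rw [mul_add, map_add]; exact add_mem h₁ h₂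
    | @homogeneous b y =>
      have hmem := SetLike.mul_mem_graded (SetLike.mul_mem_graded x.2 hg) y.2
      rw [GradedAlgebra.proj_apply]
      by_cases hn : a + d + b = n
      · rw [DirectSum.decompose_of_mem_same 𝒜 (hn ▸ hmem)]
        exact h a b x x.2 y y.2 hn
      · rw [DirectSum.decompose_of_mem_ne 𝒜 hmem hn]
        exact zero_mem P

theorem Matroid.dep_of_rk'_lt_ncard {α : Type*} [Finite α] {M : Matroid α} {n : ℕ}
    (hE : M.E = Set.univ) (hn : M.rk' Set.univ = n) {J : Set α} (hJ : n < J.ncard) :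
    M.Dep J := by
  refine ⟨fun hJi => hJ.not_ge ?_, hE ▸ Set.subset_univ J⟩
  rw [← hn]
  exact le_csSup ⟨Nat.card α, by rintro _ ⟨I, -, -, rfl⟩; exact Set.ncard_le_card I⟩
    ⟨J, Set.subset_univ J, hJi, rfl⟩

section OrlikSolomon

variable {m n : ℕ} {M : Matroid (Fin m)}

theorem FI_eq_basis (I : Finset (Fin m)) :
    FI I = (Pi.basisFun ℤ (Fin m)).ExteriorAlgebra I := by
  rw [ExteriorAlgebra.basis_apply_ofCard _ rfl, FI, ExteriorAlgebra.ιMulti_family]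
  congr 1
  funext j
  simp [fb, Set.powersetCard.ofFinEmbEquiv_symm_apply, Finset.coe_orderIsoOfFin_apply]

theorem sum_proj_basisFun (i : Fin m) :
    (∑ j : Fin m, LinearMap.proj j : Module.Dual ℤ (Fin m → ℤ)) (Pi.basisFun ℤ (Fin m) i) = 1 := by
  simp [Finset.sum_pi_single']

open CliffordAlgebra in
theorem bnd_eq : bnd m = contractLeft (∑ i : Fin m, LinearMap.proj i) := rfl

def depSpan (M : Matroid (Fin m)) (n : ℕ) : Submodule ℤ (ExteriorAlgebra ℤ (Fin m → ℤ)) :=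
  Submodule.span ℤ {z | ∃ I : Finset (Fin m), M.Dep (I : Set (Fin m)) ∧ I.card = n ∧ z = FI I}

theorem FI_mem_exteriorPower (I : Finset (Fin m)) : FI I ∈ ⋀[ℤ]^I.card (Fin m → ℤ) := by
  rw [FI_eq_basis]
  exact basis_mem_exteriorPower _ I

theorem FI_mem_OSideal {I : Finset (Fin m)} (hI : M.Dep (I : Set (Fin m))) :
    FI I ∈ OSideal M := by
  obtain ⟨i, hi⟩ := hI.nonempty
  have h := eq_ι_mul_contractLeft _ (sum_proj_basisFun i)
    (x := FI I) (by rw [FI_eq_basis]; exact ι_mul_basis_of_mem _ hi)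
  rw [h, ← bnd_eq]
  exact Submodule.subset_span ⟨_, 1, I, hI, (mul_one _).symm⟩

theorem depSpan_le_OSideal_inf_exteriorPower :
    depSpan M n ≤ OSideal M ⊓ ⋀[ℤ]^n (Fin m → ℤ) := by
  rw [depSpan, Submodule.span_le]
  rintro _ ⟨I, hI, rfl, rfl⟩
  exact ⟨FI_mem_OSideal hI, FI_mem_exteriorPower I⟩

theorem map_bnd_le_OSideal (hdep : ∀ J : Finset (Fin m), J.card = n + 1 → M.Dep (J : Set (Fin m))) :
    (⋀[ℤ]^(n + 1) (Fin m → ℤ)).map (bnd m) ≤ OSideal M := by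
  rw [Submodule.map_le_iff_le_comap, ← supersetSpan_empty (Pi.basisFun ℤ (Fin m)), supersetSpan,
    Submodule.span_le]
  rintro _ ⟨J, ⟨-, hJ⟩, rfl⟩
  exact Submodule.subset_span ⟨1, 1, J, hdep J hJ, by rw [FI_eq_basis, one_mul, mul_one]⟩

theorem mul_FI_mul_mem_depSpan (hE : M.E = Set.univ) {I : Finset (Fin m)}
    (hI : M.Dep (I : Set (Fin m))) {p q : ℕ} {u w : ExteriorAlgebra ℤ (Fin m → ℤ)}
    (hu : u ∈ ⋀[ℤ]^p (Fin m → ℤ)) (hw : w ∈ ⋀[ℤ]^q (Fin m → ℤ)) (hn : p + I.card + q = n) :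
    u * FI I * w ∈ depSpan M n := by
  have h := mul_basis_mul_mem_supersetSpan (Pi.basisFun ℤ (Fin m)) hu hw I
  rw [hn, ← FI_eq_basis] at h
  refine Submodule.span_mono ?_ h
  rintro _ ⟨J, ⟨hIJ, hJ⟩, rfl⟩
  exact ⟨J, hI.superset (Finset.coe_subset.mpr hIJ) (hE ▸ Set.subset_univ _), hJ,
    (FI_eq_basis J).symm⟩

theorem bnd_mul_FI_mul_mem_depSpan (hE : M.E = Set.univ) {I : Finset (Fin m)}
    (hI : M.Dep (I : Set (Fin m))) {p q : ℕ} {u w : ExteriorAlgebra ℤ (Fin m → ℤ)}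
    (hu : u ∈ ⋀[ℤ]^p (Fin m → ℤ)) (hw : w ∈ ⋀[ℤ]^q (Fin m → ℤ)) (hn : p + I.card + q = n + 1) :
    bnd m u * FI I * w ∈ depSpan M n := by
  cases p with
  | zero =>
    rw [bnd_eq, contractLeft_eq_zero_of_mem_exteriorPower_zero _ hu, zero_mul, zero_mul]
    exact zero_mem _
  | succ p =>
    exact mul_FI_mul_mem_depSpan hE hI (contractLeft_mem_exteriorPower _ hu) hw (by omega)

theorem mul_FI_mul_bnd_mem_depSpan (hE : M.E = Set.univ) {I : Finset (Fin m)}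
    (hI : M.Dep (I : Set (Fin m))) {p q : ℕ} {u w : ExteriorAlgebra ℤ (Fin m → ℤ)}
    (hu : u ∈ ⋀[ℤ]^p (Fin m → ℤ)) (hw : w ∈ ⋀[ℤ]^q (Fin m → ℤ)) (hn : p + I.card + q = n + 1) :
    u * FI I * bnd m w ∈ depSpan M n := by
  cases q with
  | zero =>
    rw [bnd_eq, contractLeft_eq_zero_of_mem_exteriorPower_zero _ hw, mul_zero]
    exact zero_mem _
  | succ q =>
    exact mul_FI_mul_mem_depSpan hE hI hu (contractLeft_mem_exteriorPower _ hw) (by omega)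

theorem mul_bnd_FI_mul_mem (hE : M.E = Set.univ) {I : Finset (Fin m)}
    (hI : M.Dep (I : Set (Fin m))) {p q : ℕ} {x y : ExteriorAlgebra ℤ (Fin m → ℤ)}
    (hx : x ∈ ⋀[ℤ]^p (Fin m → ℤ)) (hy : y ∈ ⋀[ℤ]^q (Fin m → ℤ))
    (hn : p + (I.card - 1) + q = n) :
    x * bnd m (FI I) * y ∈ depSpan M n ⊔ (⋀[ℤ]^(n + 1) (Fin m → ℤ)).map (bnd m) := by
  have hcard : 0 < I.card := Finset.card_pos.mpr (Finset.coe_nonempty.mp hI.nonempty)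
  have hxFy : x * FI I * y ∈ ⋀[ℤ]^(n + 1) (Fin m → ℤ) := by
    convert SetLike.mul_mem_graded (SetLike.mul_mem_graded hx (FI_mem_exteriorPower I)) hy
      using 2
    omega
  have key : (-1 : ℤ) ^ p • (x * bnd m (FI I) * y) = bnd m (x * FI I * y)
      - bnd m x * FI I * y - ((-1 : ℤ) ^ p * (-1) ^ I.card) • (x * FI I * bnd m y) := by
    rw [bnd_eq, mul_assoc x (FI I) y, contractLeft_mul_of_mem_exteriorPower _ hx,
      contractLeft_mul_of_mem_exteriorPower _ (FI_mem_exteriorPower I)]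
    simp only [mul_add, mul_smul_comm, mul_assoc]
    module
  have hsign : (-1 : ℤ) ^ p * (-1) ^ p = 1 := by rw [← pow_add, Even.neg_one_pow ⟨p, rfl⟩]
  rw [← one_smul ℤ (x * bnd m (FI I) * y), ← hsign, mul_smul, key]
  refine Submodule.smul_mem _ _ (sub_mem (sub_mem ?_ ?_) (Submodule.smul_mem _ _ ?_))
  · exact Submodule.mem_sup_right ⟨_, hxFy, rfl⟩
  · exact Submodule.mem_sup_left (bnd_mul_FI_mul_mem_depSpan hE hI hx hy (by omega))
  · exact Submodule.mem_sup_left (mul_FI_mul_bnd_mem_depSpan hE hI hx hy (by omega))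

theorem OSideal_inf_exteriorPower_le (hE : M.E = Set.univ) :
    OSideal M ⊓ ⋀[ℤ]^n (Fin m → ℤ) ≤
      depSpan M n ⊔ (⋀[ℤ]^(n + 1) (Fin m → ℤ)).map (bnd m) := by
  let 𝒜 : ℕ → Submodule ℤ (ExteriorAlgebra ℤ (Fin m → ℤ)) := fun k => ⋀[ℤ]^k (Fin m → ℤ)
  have hproj : OSideal M ≤
      (depSpan M n ⊔ (⋀[ℤ]^(n + 1) (Fin m → ℤ)).map (bnd m)).comap (GradedAlgebra.proj 𝒜 n) := by
    rw [OSideal, Submodule.span_le]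
    rintro _ ⟨x, y, I, hI, rfl⟩
    have hcard : 0 < I.card := Finset.card_pos.mpr (Finset.coe_nonempty.mp hI.nonempty)
    refine GradedAlgebra.proj_mul_mul_mem 𝒜 (d := I.card - 1) (contractLeft_mem_exteriorPower _ ?_)
      (fun _ _ _ hx _ hy hn => mul_bnd_FI_mul_mem hE hI hx hy hn) x y
    convert FI_mem_exteriorPower I using 2
    omega
  rintro z ⟨hz, hzn⟩
  have := hproj hz
  rwa [Submodule.mem_comap, GradedAlgebra.proj_apply, DirectSum.decompose_of_mem_same 𝒜 hzn] at this

end OrlikSolomon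

theorem stmt_8_general {N n : ℕ} (M : Matroid (Fin (N + 1)))
    (hE : M.E = Set.univ) (hn : M.rk' Set.univ = n) :
    OSideal M ⊓ ⋀[ℤ]^n (Fin (N + 1) → ℤ) =
      Submodule.span ℤ {z | ∃ I : Finset (Fin (N + 1)), M.Dep (I : Set (Fin (N + 1))) ∧
          I.card = n ∧ z = FI I} ⊔
        Submodule.map (bnd (N + 1)) (⋀[ℤ]^(n + 1) (Fin (N + 1) → ℤ)) ∧
    OSideal M ⊓ ⋀[ℤ]^n (Fin (N + 1) → ℤ) =
      Submodule.span ℤ {z | ∃ I : Finset (Fin (N + 1)), M.Dep (I : Set (Fin (N + 1))) ∧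
          I.card = n ∧ z = FI I} ⊔
        (⋀[ℤ]^n (Fin (N + 1) → ℤ) ⊓ LinearMap.ker (bnd (N + 1))) := by
  have hdep : ∀ J : Finset (Fin (N + 1)), J.card = n + 1 → M.Dep (J : Set (Fin (N + 1))) :=
    fun J hJ => Matroid.dep_of_rk'_lt_ncard hE hn (by rw [Set.ncard_coe_finset, hJ]; omega)
  have hker : (⋀[ℤ]^(n + 1) (Fin (N + 1) → ℤ)).map (bnd (N + 1)) =
      ⋀[ℤ]^n (Fin (N + 1) → ℤ) ⊓ LinearMap.ker (bnd (N + 1)) :=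
    (exteriorPower_inf_ker_contractLeft _ (sum_proj_basisFun 0) n).symm
  have h : OSideal M ⊓ ⋀[ℤ]^n (Fin (N + 1) → ℤ) =
      depSpan M n ⊔ (⋀[ℤ]^(n + 1) (Fin (N + 1) → ℤ)).map (bnd (N + 1)) :=
    le_antisymm (OSideal_inf_exteriorPower_le hE) <| sup_le depSpan_le_OSideal_inf_exteriorPower <|
      le_inf (map_bnd_le_OSideal hdep) (hker ▸ inf_le_left)
  exact ⟨h, hker ▸ h⟩

/-- For a loopless matroid `M` of rank `n` on `{0, ..., N}`, in top
degree the Orlik-Solomon ideal satisfies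
`OS^n = ℤ⟨F_I : I dependent of size n⟩ + Im(∂ : ⋀^{n+1} W → ⋀^n W)
      = ℤ⟨F_I : I dependent of size n⟩ + Ker(∂ : ⋀^n W → ⋀^{n-1} W)`. -/
theorem stmt_8 {N n : ℕ} (M : Matroid (Fin (N + 1))) (hM : M.Loopless')
    (hE : M.E = Set.univ) (hn : M.rk' Set.univ = n) :
    OSideal M ⊓ ⋀[ℤ]^n (Fin (N + 1) → ℤ) =
      Submodule.span ℤ {z | ∃ I : Finset (Fin (N + 1)), M.Dep (I : Set (Fin (N + 1))) ∧
          I.card = n ∧ z = FI I} ⊔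
        Submodule.map (bnd (N + 1)) (⋀[ℤ]^(n + 1) (Fin (N + 1) → ℤ)) ∧
    OSideal M ⊓ ⋀[ℤ]^n (Fin (N + 1) → ℤ) =
      Submodule.span ℤ {z | ∃ I : Finset (Fin (N + 1)), M.Dep (I : Set (Fin (N + 1))) ∧
          I.card = n ∧ z = FI I} ⊔
        (⋀[ℤ]^n (Fin (N + 1) → ℤ) ⊓ LinearMap.ker (bnd (N + 1))) :=
  stmt_8_general M hE hn
end

section
/- Let M be a loopless matroid on {0,...,N}, W₀ ⊆ W the subgroup generated by all differences f_i − f_j, and OS₀ the restriction of the Orlik–Solomon ideal OS to the subalgebra ⋀^• W₀ ⊆ ⋀^• W. Then OS₀ is generated as an abelian group by the elements ∂F_I for dependent sets I; i.e., every α ∈ OS with ∂α = 0 is a ℤ-linear combination of elements ∂F_I with I dependent. -/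
/- Shared definitions: exterior algebra pairing, basis vectors, boundary operator,
   and elementary matroid notions (rank, looplessness) not present in this Mathlib. -/

open ExteriorAlgebra

set_option maxHeartbeats 1000000
set_option synthInstance.maxHeartbeats 400000

namespace Stmt9Aux

variable {n : ℕ}

local notation "E" => ExteriorAlgebra ℤ (Fin n → ℤ)

noncomputable abbrev inv' : E →ₐ[ℤ] E := CliffordAlgebra.involute

/-- anticommutation of vectors in the exterior algebra -/
lemma iota_swap (a b : Fin n → ℤ) : ι ℤ a * ι ℤ b = - (ι ℤ b * ι ℤ a) := by
  have h0 : ι ℤ a * ι ℤ b + ι ℤ b * ι ℤ a = 0 := by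
    have := CliffordAlgebra.ι_mul_ι_add_swap (Q := (0 : QuadraticForm ℤ (Fin n → ℤ))) a b
    simpa [QuadraticMap.polar] using this
  exact eq_neg_of_add_eq_zero_left h0

/-- `ι v` commutes with `x` up to the grade involution. -/
lemma iota_mul_comm (x : E) (v : Fin n → ℤ) : ι ℤ v * x = inv' x * ι ℤ v := by
  induction x using ExteriorAlgebra.induction with
  | algebraMap r => rw [AlgHom.commutes]; exact (Algebra.commutes r _).symm
  | ι w =>
    rw [iota_swap]
    simp only [CliffordAlgebra.involute_ι]
    exact (neg_mul ((ι ℤ) w) ((ι ℤ) v)).symm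
  | mul x y hx hy =>
    rw [← mul_assoc, hx, mul_assoc, hy, map_mul, ← mul_assoc]
  | add x y hx hy => simp only [map_add, mul_add, add_mul, hx, hy]

lemma bnd_algebraMap (r : ℤ) : bnd n (algebraMap ℤ E r) = 0 := by
  unfold bnd
  exact CliffordAlgebra.contractLeft_algebraMap (0 : QuadraticForm ℤ (Fin n → ℤ)) _ r

lemma bnd_iota_mul (v : Fin n → ℤ) (x : E) :
    bnd n (ι ℤ v * x) = (∑ i, v i) • x - ι ℤ v * bnd n x := by
  unfold bnd
  rw [CliffordAlgebra.contractLeft_ι_mul]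
  congr 2
  simp

lemma bnd_iota (v : Fin n → ℤ) :
    bnd n (ι ℤ v) = algebraMap ℤ E (∑ i, v i) := by
  unfold bnd
  rw [CliffordAlgebra.contractLeft_ι]
  congr 1
  simp

/-- twisted Leibniz rule for the contraction -/
lemma bnd_mul (x y : E) : bnd n (x * y) = bnd n x * y + inv' x * bnd n y := by
  induction x using ExteriorAlgebra.induction generalizing y with
  | algebraMap r =>
    rw [bnd_algebraMap, AlgHom.commutes, zero_mul, zero_add,
      ← Algebra.smul_def, ← Algebra.smul_def, map_smul]
  | ι w =>
    rw [bnd_iota_mul, bnd_iota]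
    simp only [CliffordAlgebra.involute_ι]
    rw [Algebra.smul_def, sub_eq_add_neg, neg_mul]
  | mul a b ha hb =>
    rw [mul_assoc, ha (b * y), hb y, ha b, map_mul]
    noncomm_ring
  | add a b ha hb =>
    simp only [add_mul, map_add, ha, hb]
    abel

lemma bnd_bnd (x : E) : bnd n (bnd n x) = 0 := by
  unfold bnd
  exact CliffordAlgebra.contractLeft_contractLeft _ x

/-- any injective enumeration of a finset gives `± F_J` -/
lemma iotaMulti_eq_sign_FI (J : Finset (Fin n)) (k : ℕ) (h : J.card = k)
    (g : Fin k → Fin n) (hinj : Function.Injective g) (hmem : ∀ a, g a ∈ J) :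
    ∃ ε : ℤˣ, ιMulti ℤ k (fun a => fb (g a)) = (ε : ℤ) • FI J := by
  subst h
  set ord := J.orderIsoOfFin rfl with hord
  let g' : Fin J.card → J := fun a => ⟨g a, hmem a⟩
  have hg' : Function.Injective g' := by
    intro a b hab
    exact hinj (congrArg Subtype.val hab)
  have hbij : Function.Bijective g' := by
    rw [Fintype.bijective_iff_injective_and_card]
    exact ⟨hg', by simp [Fintype.card_coe]⟩
  let σ : Equiv.Perm (Fin J.card) := (Equiv.ofBijective g' hbij).trans ord.toEquiv.symm
  have hcomp : (fun j => fb ((ord j : J) : Fin n)) ∘ σ = fun a => fb (g a) := by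
    funext a
    simp only [Function.comp_apply, σ, Equiv.trans_apply]
    congr 1
    have : ord (ord.toEquiv.symm (Equiv.ofBijective g' hbij a)) =
        Equiv.ofBijective g' hbij a := ord.apply_symm_apply _
    rw [this]
    rfl
  refine ⟨Equiv.Perm.sign σ, ?_⟩
  have := (ιMulti ℤ J.card (M := Fin n → ℤ)).map_perm
    (fun j => fb ((ord j : J) : Fin n)) σ
  rw [hcomp] at this
  rw [this, FI, Units.smul_def]

variable (M : Matroid (Fin n))

/-- `T₁`: span of the `F_I`, `I` dependent. -/
noncomputable def T1 : Submodule ℤ E :=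
  Submodule.span ℤ {z | ∃ I : Finset (Fin n), M.Dep (I : Set (Fin n)) ∧ z = FI I}

/-- `T₂`: span of the `∂F_I`, `I` dependent. -/
noncomputable def T2 : Submodule ℤ E :=
  Submodule.span ℤ {z | ∃ I : Finset (Fin n), M.Dep (I : Set (Fin n)) ∧ z = bnd n (FI I)}

lemma iota_fb_mul_FI (hE : M.E = Set.univ) (j : Fin n) (I : Finset (Fin n))
    (hI : M.Dep (I : Set (Fin n))) : ι ℤ (fb j) * FI I ∈ T1 M := by
  set ord := I.orderIsoOfFin rfl with hord
  set g : Fin (I.card + 1) → Fin n :=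
    Fin.cons j (fun b => ((ord b : I) : Fin n)) with hg
  have key : ιMulti ℤ (I.card + 1) (fun a => fb (g a)) = ι ℤ (fb j) * FI I := by
    rw [ιMulti_succ_apply]
    have h0 : fb (g 0) = fb j := by simp [hg]
    have htail : Matrix.vecTail (fun a => fb (g a))
        = fun b => fb ((ord b : I) : Fin n) := by
      funext b
      simp [Matrix.vecTail, Function.comp, hg]
    rw [h0, htail]
    rfl
  by_cases hj : j ∈ I
  · -- repeated entry: the wedge vanishes
    obtain ⟨i, hi⟩ := ord.surjective ⟨j, hj⟩
    have heq : (fun a => fb (g a)) 0 = (fun a => fb (g a)) i.succ := by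
      simp [hg, Fin.cons_zero, Fin.cons_succ, hi]
    have hz : (ιMulti ℤ (I.card + 1)) (fun a => fb (g a)) = 0 :=
      AlternatingMap.map_eq_zero_of_eq (ιMulti ℤ (I.card + 1)) (fun a => fb (g a))
        (i := 0) (j := i.succ) heq (Fin.succ_ne_zero i).symm
    rw [← key, hz]
    exact zero_mem _
  · -- new entry: get `± F_{insert j I}`
    have hcard : (insert j I).card = I.card + 1 := Finset.card_insert_of_notMem hj
    have hdep : M.Dep ((insert j I : Finset (Fin n)) : Set (Fin n)) := by
      refine hI.superset ?_ ?_
      · rw [Finset.coe_insert]; exact Set.subset_insert _ _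
      · rw [hE]; exact Set.subset_univ _
    have hinj : Function.Injective g := by
      intro a b hab
      induction a using Fin.cases with
      | zero =>
        induction b using Fin.cases with
        | zero => rfl
        | succ b =>
          simp only [hg, Fin.cons_zero, Fin.cons_succ] at hab
          exact absurd (hab ▸ (ord b).2) hj
      | succ a =>
        induction b using Fin.cases with
        | zero =>
          simp only [hg, Fin.cons_zero, Fin.cons_succ] at hab
          exact absurd (hab ▸ (ord a).2) hj
        | succ b =>
          simp only [hg, Fin.cons_succ] at hab
          have := ord.injective (Subtype.ext hab)
          rw [this]
    have hmem : ∀ a, g a ∈ insert j I := by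
      intro a
      induction a using Fin.cases with
      | zero => simp [hg]
      | succ a => simp [hg, Fin.cons_succ, Finset.mem_insert, (ord a).2]
    obtain ⟨ε, hε⟩ := iotaMulti_eq_sign_FI (insert j I) (I.card + 1) hcard g hinj hmem
    rw [← key, hε]
    exact Submodule.smul_mem _ _ (Submodule.subset_span ⟨_, hdep, rfl⟩)

lemma fb_sum (v : Fin n → ℤ) : v = ∑ i, v i • fb i := by
  conv_lhs => rw [← Finset.univ_sum_single v]
  refine Finset.sum_congr rfl fun i _ => ?_
  rw [fb, ← Pi.single_smul, smul_eq_mul, mul_one]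

lemma iota_mul_T1 (hE : M.E = Set.univ) (v : Fin n → ℤ) {t : E} (ht : t ∈ T1 M) :
    ι ℤ v * t ∈ T1 M := by
  induction ht using Submodule.span_induction with
  | mem z hz =>
    obtain ⟨I, hI, rfl⟩ := hz
    rw [fb_sum v, map_sum, Finset.sum_mul]
    refine Submodule.sum_mem _ fun i _ => ?_
    rw [map_smul, smul_mul_assoc]
    exact Submodule.smul_mem _ _ (iota_fb_mul_FI M hE i I hI)
  | zero => rw [mul_zero]; exact zero_mem _
  | add a b _ _ ha hb => rw [mul_add]; exact Submodule.add_mem _ ha hb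
  | smul r a _ ha => rw [mul_smul_comm]; exact Submodule.smul_mem _ _ ha

lemma mul_T1 (hE : M.E = Set.univ) (x : E) : ∀ t ∈ T1 M, x * t ∈ T1 M := by
  induction x using ExteriorAlgebra.induction with
  | algebraMap r =>
    intro t ht; rw [← Algebra.smul_def]; exact Submodule.smul_mem _ _ ht
  | ι w => intro t ht; exact iota_mul_T1 M hE w ht
  | mul a b ha hb => intro t ht; rw [mul_assoc]; exact ha _ (hb _ ht)
  | add a b ha hb =>
    intro t ht; rw [add_mul]; exact Submodule.add_mem _ (ha t ht) (hb t ht)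

lemma involute_T1 {t : E} (ht : t ∈ T1 M) : inv' t ∈ T1 M := by
  induction ht using Submodule.span_induction with
  | mem z hz =>
    obtain ⟨I, hI, rfl⟩ := hz
    have hFI : inv' (FI I) = ((-1 : ℤ) ^ I.card) • FI I := by
      rw [FI, ιMulti_apply]
      have hlist : (List.ofFn fun i => ι ℤ (fb ((I.orderIsoOfFin rfl i : I) : Fin n)))
          = List.map (CliffordAlgebra.ι (0 : QuadraticForm ℤ (Fin n → ℤ)))
            (List.ofFn fun i => fb ((I.orderIsoOfFin rfl i : I) : Fin n)) := by
        rw [List.map_ofFn]; rfl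
      rw [hlist, CliffordAlgebra.involute_prod_map_ι]
      simp
    rw [hFI]
    exact Submodule.smul_mem _ _ (Submodule.subset_span ⟨_, hI, rfl⟩)
  | zero => rw [map_zero]; exact zero_mem _
  | add a b _ _ ha hb => rw [map_add]; exact Submodule.add_mem _ ha hb
  | smul r a _ ha => rw [map_smul]; exact Submodule.smul_mem _ _ ha

lemma T1_mul (hE : M.E = Set.univ) (x : E) : ∀ t ∈ T1 M, t * x ∈ T1 M := by
  induction x using ExteriorAlgebra.induction with
  | algebraMap r =>
    intro t ht
    rw [← Algebra.commutes, ← Algebra.smul_def]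
    exact Submodule.smul_mem _ _ ht
  | ι w =>
    intro t ht
    have h := iota_mul_comm (inv' t) w
    rw [CliffordAlgebra.involute_involute] at h
    rw [← h]
    exact iota_mul_T1 M hE w (involute_T1 M ht)
  | mul a b ha hb =>
    intro t ht
    rw [← mul_assoc]
    exact hb _ (ha t ht)
  | add a b ha hb =>
    intro t ht; rw [mul_add]; exact Submodule.add_mem _ (ha t ht) (hb t ht)

lemma bnd_T1 {t : E} (ht : t ∈ T1 M) : bnd n t ∈ T2 M := by
  induction ht using Submodule.span_induction with
  | mem z hz =>
    obtain ⟨I, hI, rfl⟩ := hz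
    exact Submodule.subset_span ⟨I, hI, rfl⟩
  | zero => rw [map_zero]; exact zero_mem _
  | add a b _ _ ha hb => rw [map_add]; exact Submodule.add_mem _ ha hb
  | smul r a _ ha => rw [map_smul]; exact Submodule.smul_mem _ _ ha

lemma bnd_T2_zero {t : E} (ht : t ∈ T2 M) : bnd n t = 0 := by
  induction ht using Submodule.span_induction with
  | mem z hz => obtain ⟨I, hI, rfl⟩ := hz; exact bnd_bnd _
  | zero => rw [map_zero]
  | add a b _ _ ha hb => rw [map_add, ha, hb, add_zero]
  | smul r a _ ha => rw [map_smul, ha, smul_zero]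

lemma gen_mem (hE : M.E = Set.univ) (x y : E) (I : Finset (Fin n))
    (hI : M.Dep (I : Set (Fin n))) : x * bnd n (FI I) * y ∈ T1 M ⊔ T2 M := by
  have hFI : FI I ∈ T1 M := Submodule.subset_span ⟨I, hI, rfl⟩
  have hx : inv' (inv' x) = x := CliffordAlgebra.involute_involute x
  have hmain := bnd_mul (inv' x) (FI I * y)
  rw [bnd_mul (FI I) y, hx] at hmain
  have hkey : x * bnd n (FI I) * y
      = bnd n (inv' x * (FI I * y)) - bnd n (inv' x) * (FI I * y)
        - x * (inv' (FI I) * bnd n y) := by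
    rw [hmain]
    noncomm_ring
  rw [hkey]
  refine sub_mem (sub_mem ?_ ?_) ?_
  · exact Submodule.mem_sup_right
      (bnd_T1 M (mul_T1 M hE (inv' x) _ (T1_mul M hE y _ hFI)))
  · exact Submodule.mem_sup_left (mul_T1 M hE _ _ (T1_mul M hE y _ hFI))
  · exact Submodule.mem_sup_left
      (mul_T1 M hE x _ (T1_mul M hE (bnd n y) _ (involute_T1 M hFI)))

end Stmt9Aux


/-- The projective Orlik-Solomon ideal `OS₀ = OS ∩ ⋀^• W₀`
(`⋀^• W₀ = Ker ∂`) is generated as an abelian group by the `∂F_I` for dependent `I`: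
every `α ∈ OS` with `∂α = 0` is a `ℤ`-linear combination of such elements. -/
theorem stmt_9 {N : ℕ} (M : Matroid (Fin (N + 1))) (hM : M.Loopless')
    (hE : M.E = Set.univ) (α : ExteriorAlgebra ℤ (Fin (N + 1) → ℤ))
    (hα : α ∈ OSideal M) (hd : bnd (N + 1) α = 0) :
    α ∈ Submodule.span ℤ {z | ∃ I : Finset (Fin (N + 1)),
      M.Dep (I : Set (Fin (N + 1))) ∧ z = bnd (N + 1) (FI I)} := by
  have hsub : OSideal M ≤ Stmt9Aux.T1 M ⊔ Stmt9Aux.T2 M := by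
    refine Submodule.span_le.2 ?_
    rintro z ⟨x, y, I, hI, rfl⟩
    exact Stmt9Aux.gen_mem M hE x y I hI
  obtain ⟨t₁, ht₁, t₂, ht₂, hsum⟩ := Submodule.mem_sup.1 (hsub hα)
  have h2 : bnd (N + 1) t₂ = 0 := Stmt9Aux.bnd_T2_zero M ht₂
  have h1 : bnd (N + 1) t₁ = 0 := by
    have h := hd
    rw [← hsum, map_add, h2, add_zero] at h
    exact h
  have hhom : bnd (N + 1) (ι ℤ (fb (0 : Fin (N + 1))) * t₁) = t₁ := by
    rw [Stmt9Aux.bnd_iota_mul, h1, mul_zero, sub_zero]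
    have hone : (∑ i : Fin (N + 1), fb (0 : Fin (N + 1)) i) = 1 := by
      simp [fb, Finset.sum_pi_single']
    rw [hone, one_smul]
  have ht1' : t₁ ∈ Stmt9Aux.T2 M :=
    hhom ▸ Stmt9Aux.bnd_T1 M (Stmt9Aux.iota_mul_T1 M hE _ ht₁)
  have hmem : t₁ + t₂ ∈ Stmt9Aux.T2 M := add_mem ht1' ht₂
  rw [← hsum]
  exact hmem
end

section
/- Let M be a loopless matroid and J a flat of rank k. Then OS^k ⊆ OS^k(J), where OS(J) is the ideal generated by the ∂F_I with I ⊆ J dependent together with the elements f_i for i ∉ J. In particular, for any dependent set Î of size k+1 and rank k, ∂F_{Î} ∈ OS^k(J). -/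
/- Shared definitions: exterior algebra pairing, basis vectors, boundary operator,
   and elementary matroid notions (rank, looplessness) not present in this Mathlib. -/

open ExteriorAlgebra

set_option maxHeartbeats 1000000
set_option synthInstance.maxHeartbeats 400000

/-- The restricted Orlik-Solomon ideal `OS(J)`: the two-sided ideal generated by the
`∂F_I` for dependent `I ⊆ J` together with the `f_i` for `i ∉ J`. -/
noncomputable def OSJ {n : ℕ} (M : Matroid (Fin n)) (J : Set (Fin n)) :
    Submodule ℤ (ExteriorAlgebra ℤ (Fin n → ℤ)) :=
  Submodule.span ℤ {z | ∃ x, ∃ y, ∃ g,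
    ((∃ I : Finset (Fin n), (I : Set (Fin n)) ⊆ J ∧ M.Dep (I : Set (Fin n)) ∧
        g = bnd n (FI I)) ∨
      (∃ i, i ∉ J ∧ g = ExteriorAlgebra.ι ℤ (fb i))) ∧ z = x * g * y}

lemma Matroid.Dep.sdiff_singleton_dep_of_isFlat {α : Type*} {M : Matroid α} {I F : Set α}
    {e : α} (hI : M.Dep I) (heI : e ∈ I) (hF : M.IsFlat F) (heF : e ∉ F)
    (hIF : I \ {e} ⊆ F) : M.Dep (I \ {e}) := by
  by_contra hdep
  have hind : M.Indep (I \ {e}) :=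
    Matroid.not_dep_iff (Set.sdiff_subset.trans hI.subset_ground) |>.mp hdep
  have hcl : e ∈ M.closure (I \ {e}) :=
    (hind.mem_closure_iff_of_notMem (by simp)).mpr
      (by rwa [Set.insert_sdiff_singleton, Set.insert_eq_of_mem heI])
  exact heF (hF.closure ▸ M.closure_subset_closure hIF hcl)

namespace ExteriorAlgebra

variable {n : ℕ}

noncomputable def wedgeList (L : List (Fin n)) : ExteriorAlgebra ℤ (Fin n → ℤ) :=
  (L.map fun i => ι ℤ (fb i)).prod

@[simp]
lemma wedgeList_cons (a : Fin n) (L : List (Fin n)) :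
    wedgeList (a :: L) = ι ℤ (fb a) * wedgeList L := by
  simp [wedgeList]

lemma wedgeList_perm {L L' : List (Fin n)} (h : L.Perm L') :
    ∃ ε : ℤˣ, wedgeList L = ε • wedgeList L' := by
  induction h with
  | nil => exact ⟨1, by simp⟩
  | cons a _ ih =>
    obtain ⟨ε, hε⟩ := ih
    exact ⟨ε, by rw [wedgeList_cons, hε, mul_smul_comm, wedgeList_cons]⟩
  | swap a b L =>
    refine ⟨-1, ?_⟩
    simp only [wedgeList_cons, ← mul_assoc,
      eq_neg_of_add_eq_zero_left (ι_add_mul_swap (fb b) (fb a)), neg_mul, Units.neg_smul, one_smul]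
  | trans _ _ ih₁ ih₂ =>
    obtain ⟨ε₁, h₁⟩ := ih₁
    obtain ⟨ε₂, h₂⟩ := ih₂
    exact ⟨ε₁ * ε₂, by rw [h₁, h₂, mul_smul]⟩

lemma FI_eq_wedgeList (T : Finset (Fin n)) : FI T = wedgeList (T.sort (· ≤ ·)) := by
  rw [FI, ιMulti_apply, wedgeList]
  congr 1
  apply List.ext_getElem
  · simp
  · intro i _ _
    simp only [List.getElem_ofFn, List.getElem_map]
    congr 2

lemma FI_eq_units_smul_ι_mul_FI_erase {T : Finset (Fin n)} {i : Fin n} (hi : i ∈ T) :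
    ∃ ε : ℤˣ, FI T = ε • (ι ℤ (fb i) * FI (T.erase i)) := by
  have hperm : (T.sort (· ≤ ·)).Perm (i :: (T.erase i).sort (· ≤ ·)) :=
    List.perm_of_nodup_nodup_toFinset_eq (T.sort_nodup _)
      (List.nodup_cons.mpr ⟨by simp, (T.erase i).sort_nodup _⟩)
      (by simp [Finset.insert_erase hi])
  rw [FI_eq_wedgeList, FI_eq_wedgeList]
  simpa using wedgeList_perm hperm

lemma ι_fb_mul_FI_of_mem {T : Finset (Fin n)} {i : Fin n} (hi : i ∈ T) :
    ι ℤ (fb i) * FI T = 0 := by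
  obtain ⟨ε, hε⟩ := FI_eq_units_smul_ι_mul_FI_erase hi
  rw [hε, mul_smul_comm, ← mul_assoc, ι_sq_zero, zero_mul, smul_zero]

lemma bnd_ι_fb_mul (a : Fin n) (x : ExteriorAlgebra ℤ (Fin n → ℤ)) :
    bnd n (ι ℤ (fb a) * x) = x - ι ℤ (fb a) * bnd n x := by
  have hsum :
      (∑ i : Fin n, LinearMap.proj (R := ℤ) (φ := fun _ : Fin n => ℤ) i) (fb a) = 1 := by
    simp [fb, Pi.single_apply]
  rw [bnd, CliffordAlgebra.contractLeft_ι_mul, hsum, one_smul]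

lemma FI_eq_ι_fb_mul_bnd_FI {T : Finset (Fin n)} {i : Fin n} (hi : i ∈ T) :
    FI T = ι ℤ (fb i) * bnd n (FI T) := by
  have h := congrArg (bnd n) (ι_fb_mul_FI_of_mem hi)
  rwa [bnd_ι_fb_mul, map_zero, sub_eq_zero] at h

end ExteriorAlgebra

open ExteriorAlgebra

section OSJ

variable {n : ℕ} {M : Matroid (Fin n)} {J : Set (Fin n)}

lemma mul_mul_mem_OSJ (x y : ExteriorAlgebra ℤ (Fin n → ℤ))
    {z : ExteriorAlgebra ℤ (Fin n → ℤ)} (hz : z ∈ OSJ M J) : x * z * y ∈ OSJ M J := by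
  induction hz using Submodule.span_induction with
  | mem z hz =>
    obtain ⟨x', y', g, hg, rfl⟩ := hz
    exact Submodule.subset_span ⟨x * x', y' * y, g, hg, by simp only [mul_assoc]⟩
  | zero => simp
  | add a b _ _ ha hb => simpa only [mul_add, add_mul] using add_mem ha hb
  | smul c a _ ha => simpa only [mul_smul_comm, smul_mul_assoc] using Submodule.smul_mem _ c ha

lemma bnd_FI_mem_OSJ_of_subset {I : Finset (Fin n)} (hIJ : (I : Set (Fin n)) ⊆ J)
    (hI : M.Dep (I : Set (Fin n))) : bnd n (FI I) ∈ OSJ M J :=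
  Submodule.subset_span ⟨1, 1, _, Or.inl ⟨I, hIJ, hI, rfl⟩, by simp⟩

lemma ι_fb_mul_mem_OSJ {i : Fin n} (hi : i ∉ J) (x : ExteriorAlgebra ℤ (Fin n → ℤ)) :
    ι ℤ (fb i) * x ∈ OSJ M J :=
  Submodule.subset_span ⟨1, x, _, Or.inr ⟨i, hi, rfl⟩, by simp⟩

lemma FI_mem_OSJ_of_subset {I : Finset (Fin n)} (hIJ : (I : Set (Fin n)) ⊆ J)
    (hI : M.Dep (I : Set (Fin n))) : FI I ∈ OSJ M J := by
  obtain ⟨i, hi⟩ : I.Nonempty := Finset.coe_nonempty.mp hI.nonempty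
  rw [FI_eq_ι_fb_mul_bnd_FI hi]
  simpa using mul_mul_mem_OSJ (ι ℤ (fb i)) 1 (bnd_FI_mem_OSJ_of_subset hIJ hI)

lemma FI_mem_OSJ_of_mem_of_notMem {I : Finset (Fin n)} {i : Fin n} (hiI : i ∈ I) (hiJ : i ∉ J) :
    FI I ∈ OSJ M J := by
  obtain ⟨ε, hε⟩ := FI_eq_units_smul_ι_mul_FI_erase hiI
  rw [hε]
  exact Submodule.smul_of_tower_mem _ ε (ι_fb_mul_mem_OSJ hiJ _)

/-- Writing `F_I = ± f_s ∧ F_{I∖s}` for some `s ∈ I ∖ J` gives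
`∂F_I = ±(F_{I∖s} - f_s ∧ ∂F_{I∖s})`. The second term lies in `OS(J)` because `s ∉ J`, and so
does `F_{I∖s}`: either it has a factor `f_t` with `t ∉ J`, or `I ∖ s ⊆ J` is dependent because
`J` is a flat, and then `F_{I∖s} = f_t ∧ ∂F_{I∖s}` for any `t ∈ I ∖ s`. -/
lemma bnd_FI_mem_OSJ (hJ : M.IsFlat J) {I : Finset (Fin n)} (hI : M.Dep (I : Set (Fin n))) :
    bnd n (FI I) ∈ OSJ M J := by
  by_cases hIJ : (I : Set (Fin n)) ⊆ J
  · exact bnd_FI_mem_OSJ_of_subset hIJ hI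
  obtain ⟨s, hsI, hsJ⟩ := Set.not_subset.mp hIJ
  obtain ⟨ε, hε⟩ := FI_eq_units_smul_ι_mul_FI_erase (Finset.mem_coe.mp hsI)
  rw [hε, LinearMap.map_smul_of_tower, bnd_ι_fb_mul]
  refine Submodule.smul_of_tower_mem _ ε (sub_mem ?_ (ι_fb_mul_mem_OSJ hsJ _))
  by_cases hrest : (I : Set (Fin n)) \ {s} ⊆ J
  · have hdep := hI.sdiff_singleton_dep_of_isFlat hsI hJ hsJ hrest
    rw [← Finset.coe_erase] at hrest hdep
    exact FI_mem_OSJ_of_subset hrest hdep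
  · obtain ⟨t, ⟨htI, hts⟩, htJ⟩ := Set.not_subset.mp hrest
    exact FI_mem_OSJ_of_mem_of_notMem (Finset.mem_erase.mpr ⟨hts, htI⟩) htJ

lemma OSideal_le_OSJ (hJ : M.IsFlat J) : OSideal M ≤ OSJ M J := by
  rw [OSideal, Submodule.span_le]
  rintro z ⟨x, y, I, hI, rfl⟩
  exact mul_mul_mem_OSJ x y (bnd_FI_mem_OSJ hJ hI)

end OSJ

theorem stmt_10_general {N : ℕ} (M : Matroid (Fin (N + 1))) (k : ℕ)
    (J : Set (Fin (N + 1))) (hJ : M.IsFlat J) :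
    (OSideal M ⊓ ⋀[ℤ]^k (Fin (N + 1) → ℤ) ≤ OSJ M J) ∧
    (∀ I : Finset (Fin (N + 1)), M.Dep (I : Set (Fin (N + 1))) → I.card = k + 1 →
      M.rk' (I : Set (Fin (N + 1))) = k → bnd (N + 1) (FI I) ∈ OSJ M J) :=
  ⟨inf_le_left.trans (OSideal_le_OSJ hJ), fun _ hI _ _ => bnd_FI_mem_OSJ hJ hI⟩

/-- For a flat `J` of rank `k` of a loopless matroid `M`, one has
`OS^k ⊆ OS^k(J)`; in particular `∂F_Î ∈ OS^k(J)` for every dependent set `Î` of size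
`k + 1` and rank `k`. -/
theorem stmt_10 {N : ℕ} (M : Matroid (Fin (N + 1))) (hM : M.Loopless')
    (hE : M.E = Set.univ) (k : ℕ) (J : Set (Fin (N + 1)))
    (hJ : M.IsFlat J) (hJk : M.rk' J = k) :
    (OSideal M ⊓ ⋀[ℤ]^k (Fin (N + 1) → ℤ) ≤ OSJ M J) ∧
    (∀ I : Finset (Fin (N + 1)), M.Dep (I : Set (Fin (N + 1))) → I.card = k + 1 →
      M.rk' (I : Set (Fin (N + 1))) = k → bnd (N + 1) (FI I) ∈ OSJ M J) :=
  stmt_10_general M k J hJ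
end

section
/- Let M be a loopless matroid of rank n on {0,...,N} and let β ∈ ⋀^{n-1} V with α = e_M ∧ β expressible as a sum of terms E_Î with all Î independent. Group the terms of β by the rank-(n−1) flats that are their closures: β = β_{J₁} + ... + β_{J_r} where J₁,...,J_r are the rank-(n−1) flats. Then e_{J_k} ∧ β_{J_k} = 0 for every k. -/
/- Shared definitions: exterior algebra pairing, basis vectors, boundary operator,
   and elementary matroid notions (rank, looplessness) not present in this Mathlib. -/

open ExteriorAlgebra

set_option maxHeartbeats 1000000
set_option synthInstance.maxHeartbeats 400000

/-!
Expand everything in the monomial basis `E_S` of `⋀ V`. Splitting `e_M = e_J + e_{M∖J}` gives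
`α = ∑_J e_J ∧ β_J + ∑_J e_{M∖J} ∧ β_J`. For an independent `(n-1)`-set `I` with closure `J`,
the monomials of `e_J ∧ E_I` are dependent `n`-sets with closure `J`, while those of
`e_{M∖J} ∧ E_I` are independent. As `α` has only independent terms, the coefficient of a
dependent `n`-set `S` in `∑_J e_J ∧ β_J` vanishes, and only the summand `J = cl(S)` contributes
to it. Hence `e_J ∧ β_J` has no dependent terms, and by construction no independent ones.
-/

namespace ExteriorAlgebra

variable {R V I : Type*} [CommRing R] [AddCommGroup V] [Module R V] [LinearOrder I]
  (b : Module.Basis I R V)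

theorem basis_repr_ιMulti_of_ne {k : ℕ} {u : Fin k → I} (hu : Function.Injective u)
    {s : Finset I} (hs : s ≠ Finset.univ.image u) :
    b.ExteriorAlgebra.repr (ιMulti R k fun i => b (u i)) s = 0 := by
  -- In degree `≠ k` the coordinate vanishes by the grading; in degree `k` it is a determinant
  -- with a zero column, indexed by an element of `s` outside the image of `u`.
  have hmem : ιMulti R k (fun i => b (u i)) ∈ ⋀[R]^k V := ιMulti_range R k ⟨_, rfl⟩
  rw [Module.Basis.ExteriorAlgebra, Module.Basis.repr_reindex_apply,
    Set.powersetCard.prodEquiv_symm_apply]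
  obtain hcard | rfl := ne_or_eq k s.card
  · exact DirectSum.IsInternal.collectedBasis_repr_of_mem_ne _ _ hcard hmem
  rw [DirectSum.IsInternal.collectedBasis_repr_of_mem _ _ hmem, exteriorPower.basis_repr_apply,
    show (⟨_, hmem⟩ : ⋀[R]^s.card V) = exteriorPower.ιMulti R _ fun i => b (u i) from rfl,
    exteriorPower.ιMultiDual_apply_ιMulti]
  obtain ⟨x, hxs, hxu⟩ : ∃ x ∈ s, x ∉ Finset.univ.image u := by
    by_contra! h
    exact hs (Finset.eq_of_subset_of_card_le h (by rw [Finset.card_image_of_injective _ hu]; simp))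
  obtain ⟨j, hj⟩ := (Set.powersetCard.mem_range_ofFinEmbEquiv_symm_iff_mem
    (Set.powersetCard.ofCard rfl) x).mpr hxs
  refine Matrix.det_eq_zero_of_column_eq_zero j fun i => ?_
  rw [Matrix.of_apply, hj, Module.Basis.coord_apply, Module.Basis.repr_self,
    Finsupp.single_eq_of_ne]
  rintro rfl
  exact hxu (Finset.mem_image_of_mem u (Finset.mem_univ i))

def monomialSpan (k : ℕ) (P : Set I → Prop) : Submodule R (ExteriorAlgebra R V) :=
  Submodule.span R {x | ∃ u : Fin k → I, Function.Injective u ∧ P (Set.range u) ∧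
    x = ιMulti R k fun i => b (u i)}

variable {b}

theorem basis_repr_eq_zero_of_mem_monomialSpan {k : ℕ} {P : Set I → Prop}
    {x : ExteriorAlgebra R V} (hx : x ∈ monomialSpan b k P) {s : Finset I} (hs : ¬ P s) :
    b.ExteriorAlgebra.repr x s = 0 := by
  suffices monomialSpan b k P ≤ LinearMap.ker (b.ExteriorAlgebra.coord s) from this hx
  refine Submodule.span_le.mpr ?_
  rintro _ ⟨u, hu, hPu, rfl⟩
  refine basis_repr_ιMulti_of_ne b hu fun hsu => hs ?_
  rwa [hsu, Finset.coe_image, Finset.coe_univ, Set.image_univ]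

theorem eq_zero_of_mem_monomialSpan {k : ℕ} {P : Set I → Prop} {x : ExteriorAlgebra R V}
    (hx : x ∈ monomialSpan b k P) (h : ∀ s : Finset I, P s → b.ExteriorAlgebra.repr x s = 0) :
    x = 0 :=
  b.ExteriorAlgebra.ext_elem fun s => by
    by_cases hs : P s
    · simp [h s hs]
    · simp [basis_repr_eq_zero_of_mem_monomialSpan hx hs]

theorem ι_mul_mem_monomialSpan {m : ℕ} {P Q : Set I → Prop} {T : Set I} {y : V}
    (hy : ∀ j ∉ T, b.repr y j = 0)
    (hPQ : ∀ X, P X → ∀ j ∈ T, j ∉ X → Q (insert j X))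
    {x : ExteriorAlgebra R V} (hx : x ∈ monomialSpan b m P) :
    ι R y * x ∈ monomialSpan b (m + 1) Q := by
  suffices monomialSpan b m P ≤ (monomialSpan b (m + 1) Q).comap (LinearMap.mulLeft R (ι R y))
    from this hx
  refine Submodule.span_le.mpr ?_
  rintro _ ⟨v, hv, hPv, rfl⟩
  rw [SetLike.mem_coe, Submodule.mem_comap, LinearMap.mulLeft_apply, ← b.linearCombination_repr y,
    Finsupp.linearCombination_apply, Finsupp.sum, map_sum, Finset.sum_mul]
  refine Submodule.sum_mem _ fun j _ => ?_
  rw [map_smul, smul_mul_assoc]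
  by_cases hjT : j ∈ T
  · refine Submodule.smul_mem _ _ ?_
    have hcons : ι R (b j) * ιMulti R m (fun i => b (v i)) =
        ιMulti R (m + 1) fun i => b ((Fin.cons j v : Fin (m + 1) → I) i) := by
      simp [Matrix.vecTail, Function.comp_def]
    rw [hcons]
    by_cases hjv : j ∈ Set.range v
    · rw [ιMulti_eq_zero_of_not_inj fun h => ?_]
      · exact zero_mem _
      · exact (Fin.cons_injective_iff.mp h.of_comp).1 hjv
    · refine Submodule.subset_span ⟨_, Fin.cons_injective_iff.mpr ⟨hjv, hv⟩, ?_, rfl⟩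
      rw [Fin.range_cons]
      exact hPQ _ hPv j hjT hjv
  · rw [hy j hjT, zero_smul]
    exact zero_mem _

theorem eq_zero_of_sum_mem_monomialSpan {k : ℕ} {ι : Type*} {P : Set I → Prop}
    {Q : ι → Set I → Prop} (hQ : ∀ J J' X, Q J X → Q J' X → J = J')
    (hPQ : ∀ J X, Q J X → ¬ P X) {x : ι → ExteriorAlgebra R V}
    (hx : ∀ J, x J ∈ monomialSpan b k (Q J)) {S : Finset ι}
    (hsum : ∑ J ∈ S, x J ∈ monomialSpan b k P) {J : ι} (hJ : J ∈ S) : x J = 0 := by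
  refine eq_zero_of_mem_monomialSpan (hx J) fun s hQs => ?_
  have h := basis_repr_eq_zero_of_mem_monomialSpan hsum (hPQ J s hQs)
  rwa [map_sum, Finsupp.finsetSum_apply, Finset.sum_eq_single_of_mem J hJ fun J' _ hJ' =>
    basis_repr_eq_zero_of_mem_monomialSpan (hx J') fun h => hJ' (hQ _ _ _ h hQs)] at h

variable {M : Matroid I} {m : ℕ} {J : Set I} {y : V} {x : ExteriorAlgebra R V}

theorem ι_mul_mem_monomialSpan_dep (hy : ∀ j ∉ J, b.repr y j = 0)
    (hx : x ∈ monomialSpan b m fun X => M.Indep X ∧ M.closure X = J) :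
    ι R y * x ∈ monomialSpan b (m + 1) fun X => ¬ M.Indep X ∧ M.closure X = J := by
  refine ι_mul_mem_monomialSpan hy ?_ hx
  rintro X ⟨hX, rfl⟩ j hj hjX
  exact ⟨((hX.mem_closure_iff_of_notMem hjX).mp hj).not_indep,
    M.closure_insert_eq_of_mem_closure hj⟩

theorem ι_mul_mem_monomialSpan_indep (hy : ∀ j ∉ M.E \ J, b.repr y j = 0)
    (hx : x ∈ monomialSpan b m fun X => M.Indep X ∧ M.closure X = J) :
    ι R y * x ∈ monomialSpan b (m + 1) M.Indep := by
  refine ι_mul_mem_monomialSpan hy ?_ hx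
  rintro X ⟨hX, rfl⟩ j hj hjX
  exact (hX.insert_indep_iff_of_notMem hjX).mpr hj

end ExteriorAlgebra

theorem eS_add_eS_compl {n : ℕ} (S : Set (Fin n)) : eS S + eS Sᶜ = eS Set.univ := by
  funext x
  by_cases h : x ∈ S <;> simp [eS, h]

theorem stmt_18_general {N n : ℕ} (M : Matroid (Fin (N + 1)))
    (hE : M.E = Set.univ) (hpos : 0 < n)
    (βc : Set (Fin (N + 1)) → ExteriorAlgebra ℤ (Fin (N + 1) → ℤ))
    (hβ : ∀ J, βc J ∈ Submodule.span ℤ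
      {x : ExteriorAlgebra ℤ (Fin (N + 1) → ℤ) | ∃ v : Fin (n - 1) → Fin (N + 1),
        Function.Injective v ∧ M.Indep (Set.range v) ∧ M.closure (Set.range v) = J ∧
        x = ιMulti ℤ (n - 1) fun i => fb (v i)})
    (hα : ExteriorAlgebra.ι ℤ (eS Set.univ) * ∑ᶠ J, βc J ∈ Submodule.span ℤ
      {x : ExteriorAlgebra ℤ (Fin (N + 1) → ℤ) | ∃ v : Fin n → Fin (N + 1),
        Function.Injective v ∧ M.Indep (Set.range v) ∧
        x = ιMulti ℤ n fun i => fb (v i)}) :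
    ∀ J, ExteriorAlgebra.ι ℤ (eS J) * βc J = 0 := by
  obtain ⟨m, rfl⟩ : ∃ m, n = m + 1 := ⟨n - 1, by omega⟩
  set b := Pi.basisFun ℤ (Fin (N + 1))
  have hβ' (J : Set (Fin (N + 1))) :
      βc J ∈ monomialSpan b m fun X => M.Indep X ∧ M.closure X = J := by
    refine Submodule.span_mono ?_ (hβ J)
    rintro _ ⟨v, hv, hI, hcl, rfl⟩
    exact ⟨v, hv, ⟨hI, hcl⟩, by simp [b, fb]⟩
  have hα' : ι ℤ (eS Set.univ) * ∑ᶠ J, βc J ∈ monomialSpan b (m + 1) M.Indep := by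
    refine Submodule.span_mono ?_ hα
    rintro _ ⟨v, hv, hI, rfl⟩
    exact ⟨v, hv, hI, by simp [b, fb]⟩
  have hin (J : Set (Fin (N + 1))) := ι_mul_mem_monomialSpan_dep (y := eS J)
    (fun j hj => by simp [b, eS, hj]) (hβ' J)
  have hout (J : Set (Fin (N + 1))) := ι_mul_mem_monomialSpan_indep (y := eS Jᶜ)
    (fun j hj => by simp_all [b, eS]) (hβ' J)
  have hsum : ∑ J, ι ℤ (eS J) * βc J ∈ monomialSpan b (m + 1) M.Indep := by
    have hsplit : ∑ J, ι ℤ (eS J) * βc J =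
        ι ℤ (eS Set.univ) * ∑ᶠ J, βc J - ∑ J, ι ℤ (eS Jᶜ) * βc J := by
      rw [finsum_eq_sum_of_fintype, Finset.mul_sum, ← Finset.sum_sub_distrib]
      refine Finset.sum_congr rfl fun J _ => ?_
      rw [← eS_add_eS_compl J, map_add, add_mul, add_sub_cancel_right]
    rw [hsplit]
    exact sub_mem hα' (sum_mem fun J _ => hout J)
  exact fun J => eq_zero_of_sum_mem_monomialSpan (fun J J' X h h' => h.2.symm.trans h'.2)
    (fun J X h => h.1) hin hsum (Finset.mem_univ J)

/-- Let `M` be a loopless matroid of rank `n` on `{0, ..., N}` and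
`β ∈ ⋀^{n-1} V` with `α = e_M ∧ β` a combination of independent terms `E_Î`.  Grouping
the (independent) terms of `β` by the rank-`(n-1)` flats that are their closures,
`β = β_{J₁} + ... + β_{J_r}`, one has `e_{J_k} ∧ β_{J_k} = 0` for every `k`. -/
theorem stmt_18 {N n : ℕ} (M : Matroid (Fin (N + 1))) (hM : M.Loopless')
    (hE : M.E = Set.univ) (hn : M.rk' Set.univ = n) (hpos : 0 < n)
    (βc : Set (Fin (N + 1)) → ExteriorAlgebra ℤ (Fin (N + 1) → ℤ))
    (hsupp : ∀ J, βc J ≠ 0 → M.IsFlat J ∧ M.rk' J = n - 1)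
    (hβ : ∀ J, βc J ∈ Submodule.span ℤ
      {x : ExteriorAlgebra ℤ (Fin (N + 1) → ℤ) | ∃ v : Fin (n - 1) → Fin (N + 1),
        Function.Injective v ∧ M.Indep (Set.range v) ∧ M.closure (Set.range v) = J ∧
        x = ιMulti ℤ (n - 1) fun i => fb (v i)})
    (hα : ExteriorAlgebra.ι ℤ (eS Set.univ) * ∑ᶠ J, βc J ∈ Submodule.span ℤ
      {x : ExteriorAlgebra ℤ (Fin (N + 1) → ℤ) | ∃ v : Fin n → Fin (N + 1),
        Function.Injective v ∧ M.Indep (Set.range v) ∧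
        x = ιMulti ℤ n fun i => fb (v i)}) :
    ∀ J, ExteriorAlgebra.ι ℤ (eS J) * βc J = 0 :=
  stmt_18_general M hE hpos βc hβ hα
end

section
/- Let W be a free abelian group with basis f₀,...,f_N and W₀ the subgroup generated by all differences f_i − f_j. Then ⋀^• W₀, viewed as a subalgebra of ⋀^• W, equals both the image and the kernel of the boundary derivation ∂ : ⋀^• W → ⋀^• W (with ∂f_i = 1): ⋀^• W₀ = Im ∂ = Ker ∂. -/
/-!
The boundary `∂` is contraction with a functional `d` (here `d = ∑ eᵢ`), and `W₀ = ker d`.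
Contraction is an odd derivation vanishing on `W₀`, so `⋀ W₀ ⊆ ker ∂`. Fixing `e` with
`d e = 1` (here `e = f₀`), `W = W₀ ⊕ ℤ e` gives `⋀ W = ⋀ W₀ ⊕ e ∧ ⋀ W₀`, and `∂ (b + e ∧ a) = a`
for `a, b ∈ ⋀ W₀`. Hence `ker ∂ = ⋀ W₀`, and `x = ∂ (e ∧ x)` for `x ∈ ker ∂` together with
`∂² = 0` gives `im ∂ = ker ∂`.
-/

open ExteriorAlgebra

set_option maxHeartbeats 1000000
set_option synthInstance.maxHeartbeats 400000

namespace CliffordAlgebra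

variable {R M : Type*} [CommRing R] [AddCommGroup M] [Module R M] {Q : QuadraticForm R M}

theorem contractLeft_mul (d : Module.Dual R M) (x y : CliffordAlgebra Q) :
    contractLeft d (x * y) = contractLeft d x * y + involute x * contractLeft d y := by
  induction x using CliffordAlgebra.induction generalizing y with
  | algebraMap r =>
      rw [contractLeft_algebraMap_mul, contractLeft_algebraMap, zero_mul, zero_add,
        AlgHom.commutes]
  | ι w =>
      rw [contractLeft_ι_mul, contractLeft_ι, involute_ι, Algebra.smul_def, neg_mul,
        sub_eq_add_neg]
  | mul a b ha hb =>
      rw [mul_assoc, ha, hb, ha, map_mul involute]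
      noncomm_ring
  | add a b ha hb =>
      rw [add_mul, map_add, ha, hb, map_add, add_mul, map_add, add_mul]
      abel

end CliffordAlgebra

namespace ExteriorAlgebra

variable {R M : Type*} [CommRing R] [AddCommGroup M] [Module R M]

open CliffordAlgebra

theorem ι_mul_eq_involute_mul_ι (v : M) (x : ExteriorAlgebra R M) :
    ι R v * x = involute x * ι R v := by
  induction x using ExteriorAlgebra.induction with
  | algebraMap r => rw [AlgHom.commutes, Algebra.commutes]
  | ι w =>
      rw [involute_ι, neg_mul, eq_neg_iff_add_eq_zero]
      exact ι_add_mul_swap v w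
  | mul a b ha hb => rw [← mul_assoc, ha, mul_assoc, hb, map_mul, mul_assoc]
  | add a b ha hb => rw [mul_add, ha, hb, map_add, add_mul]

theorem ι_mul_ι_mul_eq_zero (v : M) (a b : ExteriorAlgebra R M) :
    ι R v * a * (ι R v * b) = 0 := by
  rw [ι_mul_eq_involute_mul_ι v a, mul_assoc, ← mul_assoc (ι R v), ι_sq_zero, zero_mul,
    mul_zero]

section KerAdjoin

variable (d : Module.Dual R M)

/-- The exterior algebra of `ker d`, as a subalgebra of `⋀ M`. -/
noncomputable def kerAdjoin : Subalgebra R (ExteriorAlgebra R M) :=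
  Algebra.adjoin R (ι R '' (LinearMap.ker d : Set M))

variable {d}

theorem contractLeft_eq_zero_of_mem_kerAdjoin {x : ExteriorAlgebra R M}
    (hx : x ∈ kerAdjoin d) : contractLeft d x = 0 := by
  induction hx using Algebra.adjoin_induction with
  | mem x hx =>
      obtain ⟨w, hw, rfl⟩ := hx
      rw [contractLeft_ι, LinearMap.mem_ker.mp hw, map_zero]
  | algebraMap r => rw [contractLeft_algebraMap]
  | add x y _ _ hx hy => rw [map_add, hx, hy, add_zero]
  | mul x y _ _ hx hy => rw [contractLeft_mul, hx, hy, zero_mul, mul_zero, add_zero]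

theorem involute_mem_kerAdjoin {x : ExteriorAlgebra R M} (hx : x ∈ kerAdjoin d) :
    involute x ∈ kerAdjoin d := by
  induction hx using Algebra.adjoin_induction with
  | mem x hx =>
      obtain ⟨w, hw, rfl⟩ := hx
      rw [involute_ι]
      exact neg_mem (Algebra.subset_adjoin ⟨w, hw, rfl⟩)
  | algebraMap r => rw [AlgHom.commutes]; exact algebraMap_mem _ r
  | add x y _ _ hx hy => rw [map_add]; exact add_mem hx hy
  | mul x y _ _ hx hy => rw [map_mul]; exact mul_mem hx hy

variable {e : M}

theorem contractLeft_ι_mul_of_contractLeft_eq_zero (he : d e = 1) {x : ExteriorAlgebra R M}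
    (hx : contractLeft d x = 0) : contractLeft d (ι R e * x) = x := by
  rw [contractLeft_ι_mul, hx, mul_zero, sub_zero, he, one_smul]

theorem exists_eq_add_ι_mul (he : d e = 1) (x : ExteriorAlgebra R M) :
    ∃ a ∈ kerAdjoin d, ∃ b ∈ kerAdjoin d, x = b + ι R e * a := by
  induction x using ExteriorAlgebra.induction with
  | algebraMap r =>
      exact ⟨0, zero_mem _, algebraMap R _ r, algebraMap_mem _ r, by rw [mul_zero, add_zero]⟩
  | ι v =>
      have hv : v - d v • e ∈ LinearMap.ker d := by
        rw [LinearMap.mem_ker, map_sub, map_smul, he, smul_eq_mul, mul_one, sub_self]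
      refine ⟨algebraMap R _ (d v), algebraMap_mem _ _, ι R (v - d v • e),
        Algebra.subset_adjoin ⟨_, hv, rfl⟩, ?_⟩
      rw [← Algebra.commutes, ← Algebra.smul_def, ← map_smul, ← map_add, sub_add_cancel]
  | mul x y hx hy =>
      obtain ⟨a, ha, b, hb, rfl⟩ := hx
      obtain ⟨a', ha', b', hb', rfl⟩ := hy
      refine ⟨involute b * a' + a * b',
        add_mem (mul_mem (involute_mem_kerAdjoin hb) ha') (mul_mem ha hb'),
        b * b', mul_mem hb hb', ?_⟩
      have hb_ι : b * ι R e = ι R e * involute b := by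
        rw [ι_mul_eq_involute_mul_ι, involute_involute]
      rw [add_mul, mul_add, mul_add, ι_mul_ι_mul_eq_zero, add_zero, ← mul_assoc b, hb_ι,
        mul_add, mul_assoc, mul_assoc]
      abel
  | add x y hx hy =>
      obtain ⟨a, ha, b, hb, rfl⟩ := hx
      obtain ⟨a', ha', b', hb', rfl⟩ := hy
      exact ⟨a + a', add_mem ha ha', b + b', add_mem hb hb', by rw [mul_add]; abel⟩

theorem kerAdjoin_eq_ker_contractLeft (he : d e = 1) :
    (kerAdjoin d : Set (ExteriorAlgebra R M)) = {x | contractLeft d x = 0} := by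
  ext x
  refine ⟨contractLeft_eq_zero_of_mem_kerAdjoin, fun hx => ?_⟩
  obtain ⟨a, ha, b, hb, rfl⟩ := exists_eq_add_ι_mul he x
  have ha0 : a = 0 := by
    replace hx : contractLeft d (b + ι R e * a) = 0 := hx
    rw [map_add, contractLeft_eq_zero_of_mem_kerAdjoin hb, zero_add,
      contractLeft_ι_mul_of_contractLeft_eq_zero he
        (contractLeft_eq_zero_of_mem_kerAdjoin ha)] at hx
    exact hx
  rw [ha0, mul_zero, add_zero]
  exact hb

theorem kerAdjoin_eq_range_contractLeft (he : d e = 1) :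
    (kerAdjoin d : Set (ExteriorAlgebra R M)) = Set.range (contractLeft d) := by
  rw [kerAdjoin_eq_ker_contractLeft he]
  ext x
  refine ⟨fun hx => ⟨ι R e * x, contractLeft_ι_mul_of_contractLeft_eq_zero he hx⟩, ?_⟩
  rintro ⟨y, rfl⟩
  exact contractLeft_contractLeft d y

end KerAdjoin

end ExteriorAlgebra

theorem sum_proj_fb {n : ℕ} (i : Fin n) :
    (∑ j : Fin n, LinearMap.proj j : Module.Dual ℤ (Fin n → ℤ)) (fb i) = 1 := by
  simp [fb, LinearMap.sum_apply, Pi.single_apply]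

theorem span_fb_sub_fb_eq_ker {n : ℕ} (i₀ : Fin n) :
    Submodule.span ℤ {w : Fin n → ℤ | ∃ i j, w = fb i - fb j} =
      LinearMap.ker (∑ j : Fin n, LinearMap.proj j : Module.Dual ℤ (Fin n → ℤ)) := by
  apply le_antisymm
  · rw [Submodule.span_le]
    rintro _ ⟨i, j, rfl⟩
    rw [SetLike.mem_coe, LinearMap.mem_ker, map_sub, sum_proj_fb, sum_proj_fb, sub_self]
  · intro v hv
    have hv_sum : v = ∑ i, v i • (fb i - fb i₀) := by
      have hv0 : ∑ i, v i = 0 := by simpa [LinearMap.sum_apply] using hv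
      simp only [smul_sub, Finset.sum_sub_distrib, ← Finset.sum_smul, hv0, zero_smul,
        sub_zero]
      funext j
      simp [fb, Pi.single_apply]
    rw [hv_sum]
    exact Submodule.sum_mem _ fun i _ =>
      Submodule.smul_mem _ _ (Submodule.subset_span ⟨i, i₀, rfl⟩)

/-- Let `W = ℤ^{N+1}` with basis `f₀, ..., f_N` and `W₀` the subgroup
generated by the differences `fᵢ - fⱼ`.  Then `⋀^• W₀`, the subalgebra of `⋀^• W`
generated by `W₀`, equals both the image and the kernel of the boundary derivation
`∂` (with `∂ fᵢ = 1`):  `⋀^• W₀ = Im ∂ = Ker ∂`. -/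
theorem stmt_19 {N : ℕ} :
    ((Algebra.adjoin ℤ ((ExteriorAlgebra.ι ℤ) ''
        (Submodule.span ℤ {w : Fin (N + 1) → ℤ | ∃ i j, w = fb i - fb j} :
          Set (Fin (N + 1) → ℤ))) : Subalgebra ℤ _) : Set _) =
        Set.range (bnd (N + 1)) ∧
    ((Algebra.adjoin ℤ ((ExteriorAlgebra.ι ℤ) ''
        (Submodule.span ℤ {w : Fin (N + 1) → ℤ | ∃ i j, w = fb i - fb j} :
          Set (Fin (N + 1) → ℤ))) : Subalgebra ℤ _) : Set _) =
        {x | bnd (N + 1) x = 0} := by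
  rw [span_fb_sub_fb_eq_ker 0]
  exact ⟨kerAdjoin_eq_range_contractLeft (sum_proj_fb 0),
    kerAdjoin_eq_ker_contractLeft (sum_proj_fb 0)⟩
end
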